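/- arXiv:2402.02359 — 4 statements merged into one kernel-verified Lean document; each statement's English description precedes it below -/
import Mathlib

section
/- Let f : ℝ^d → ℝ be twice continuously differentiable, convex (∇²f(x) ⪰ 0 for all x), and M-strongly self-concordant. For x, y ∈ ℝ^d set r := ‖y − x‖_{∇²f(x)}. Then (1/(1 + Mr))·∇²f(x) ⪯ ∇²f(y) ⪯ (1 + Mr)·∇²f(x). -/
open Matrix

noncomputable section

abbrev Evec (d : ℕ) := EuclideanSpace ℝ (Fin d)

/-- Gradient vector: coordinates are the partial derivatives. -/
noncomputable def gradE {d : ℕ} (f : Evec d → ℝ) (x : Evec d) : Evec d :=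
  WithLp.toLp 2 fun i => fderiv ℝ f x (EuclideanSpace.single i 1)

/-- Hessian matrix: entries are the second partial derivatives. -/
noncomputable def hessE {d : ℕ} (f : Evec d → ℝ) (x : Evec d) : Matrix (Fin d) (Fin d) ℝ :=
  Matrix.of fun i j =>
    iteratedFDeriv ℝ 2 f x ![EuclideanSpace.single i 1, EuclideanSpace.single j 1]

/-- Spectral norm of a matrix (operator norm on Euclidean space). -/
noncomputable def specNorm {d : ℕ} (A : Matrix (Fin d) (Fin d) ℝ) : ℝ :=
  ‖Matrix.toEuclideanCLM (𝕜 := ℝ) A‖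

/-- ‖v‖_A = √(vᵀ A v). -/
noncomputable def anorm {d : ℕ} (A : Matrix (Fin d) (Fin d) ℝ) (v : Evec d) : ℝ :=
  Real.sqrt ((fun i => v i) ⬝ᵥ A.mulVec (fun i => v i))

/-- Matrix-vector product on Euclidean space. -/
noncomputable def mulVecE {d : ℕ} (A : Matrix (Fin d) (Fin d) ℝ) (v : Evec d) : Evec d :=
  WithLp.toLp 2 fun i => A.mulVec (fun j => v j) i

/-!
Both bounds are instances of strong self-concordance with `z = w = x`: taking the pair
`(x, y)` gives `∇²f(y) ⪯ (1 + Mr) ∇²f(x)` directly, and the pair `(y, x)` gives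
`∇²f(x) ⪯ (1 + Mr) ∇²f(y)`, which is divided by `1 + Mr` (when `1 + Mr ≤ 0` the lower bound
follows from convexity alone).
-/

lemma anorm_neg {d : ℕ} (A : Matrix (Fin d) (Fin d) ℝ) (v : Evec d) :
    anorm A (-v) = anorm A v := by
  have h : (fun i => (-v) i) = -(fun i => v i) := rfl
  rw [anorm, anorm, h, mulVec_neg, neg_dotProduct, dotProduct_neg, neg_neg]

lemma anorm_sub_comm {d : ℕ} (A : Matrix (Fin d) (Fin d) ℝ) (u v : Evec d) :
    anorm A (u - v) = anorm A (v - u) := by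
  rw [← neg_sub, anorm_neg]

lemma Matrix.PosSemidef.sub_inv_smul_of_smul_sub {n : Type*} [Fintype n]
    {A B : Matrix n n ℝ} (hA : A.PosSemidef) (hB : B.PosSemidef) {c : ℝ}
    (h : (c • B - A).PosSemidef) : (B - c⁻¹ • A).PosSemidef := by
  rcases le_or_gt c 0 with hc | hc
  · have hA' : ((-c⁻¹) • A).PosSemidef := hA.smul (neg_nonneg.mpr (inv_nonpos.mpr hc))
    simpa only [sub_eq_add_neg, neg_smul] using hB.add hA'
  · have := h.smul (inv_nonneg.mpr hc.le)
    rwa [smul_sub, smul_smul, inv_mul_cancel₀ hc.ne', one_smul] at this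

theorem stmt_2_general {d : ℕ} (f : Evec d → ℝ) (M : ℝ)
    (hconv : ∀ x : Evec d, (hessE f x).PosSemidef)
    (hsc : ∀ x y z w : Evec d,
      ((M * anorm (hessE f z) (y - x)) • hessE f w - (hessE f y - hessE f x)).PosSemidef)
    (x y : Evec d) :
    (hessE f y - (1 + M * anorm (hessE f x) (y - x))⁻¹ • hessE f x).PosSemidef
      ∧ ((1 + M * anorm (hessE f x) (y - x)) • hessE f x - hessE f y).PosSemidef := by
  set c := 1 + M * anorm (hessE f x) (y - x)
  have upper : (c • hessE f x - hessE f y).PosSemidef := by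
    convert hsc x y x x using 1
    module
  have lower : (c • hessE f y - hessE f x).PosSemidef := by
    convert hsc y x x y using 1
    rw [anorm_sub_comm]
    module
  exact ⟨(hconv x).sub_inv_smul_of_smul_sub (hconv y) lower, upper⟩

/-- Hessians of strongly self-concordant convex functions at nearby points
are multiplicatively close. -/
theorem stmt_2 {d : ℕ} (f : Evec d → ℝ) (M : ℝ)
    (hC2 : ContDiff ℝ 2 f)
    (hconv : ∀ x : Evec d, (hessE f x).PosSemidef)
    (hsc : ∀ x y z w : Evec d,
      ((M * anorm (hessE f z) (y - x)) • hessE f w - (hessE f y - hessE f x)).PosSemidef)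
    (x y : Evec d) :
    (hessE f y - (1 + M * anorm (hessE f x) (y - x))⁻¹ • hessE f x).PosSemidef
      ∧ ((1 + M * anorm (hessE f x) (y - x)) • hessE f x - hessE f y).PosSemidef :=
  stmt_2_general f M hconv hsc x y

end
end

section
/- Let A, G be symmetric positive definite d×d real matrices with A ⪯ G ⪯ ηA for some η ≥ 1, let 1 ≤ k < d, and let U ∈ ℝ^{d×k} be of full column rank such that either GU = AU or U^⊤(G−A)U is invertible. Set G₊ := SR-k(G, A, U). Then A ⪯ G₊ ⪯ ηA. -/
open Matrix

noncomputable section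

open scoped Classical in
/-- SR-k update: SR-k(G, A, U) = G if GU = AU, otherwise
G − (G−A)U(Uᵀ(G−A)U)⁻¹Uᵀ(G−A). -/
noncomputable def SRk {d k : ℕ} (G A : Matrix (Fin d) (Fin d) ℝ)
    (U : Matrix (Fin d) (Fin k) ℝ) : Matrix (Fin d) (Fin d) ℝ :=
  if G * U = A * U then G
  else G - (G - A) * U * (Uᵀ * (G - A) * U)⁻¹ * Uᵀ * (G - A)

/-- the SR-k update preserves the sandwich A ⪯ G₊ ⪯ ηA. -/
theorem stmt_6 {d k : ℕ} (hk1 : 1 ≤ k) (hkd : k < d)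
    (A G : Matrix (Fin d) (Fin d) ℝ) (η : ℝ) (hη : 1 ≤ η)
    (hA : A.PosDef) (hG : G.PosDef)
    (hAG : (G - A).PosSemidef) (hGηA : (η • A - G).PosSemidef)
    (U : Matrix (Fin d) (Fin k) ℝ) (hU : U.rank = k)
    (hgram : G * U = A * U ∨ IsUnit (Uᵀ * (G - A) * U).det) :
    (SRk G A U - A).PosSemidef ∧ (η • A - SRk G A U).PosSemidef := by
  classical
  by_cases heq : G * U = A * U
  · rw [SRk, if_pos heq]
    exact ⟨hAG, hGηA⟩
  · have hdet : IsUnit (Uᵀ * (G - A) * U).det := hgram.resolve_left heq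
    set H := G - A with hHdef
    set M := Uᵀ * H * U with hMdef
    have hct : ∀ {m n : ℕ} (B : Matrix (Fin m) (Fin n) ℝ), Bᴴ = Bᵀ := fun B =>
      conjTranspose_eq_transpose_of_trivial B
    have hHt : Hᵀ = H := by rw [← hct H]; exact hAG.isHermitian
    have hM : M.PosSemidef := by
      have := hAG.conjTranspose_mul_mul_same U
      rwa [hct] at this
    have hMt : Mᵀ = M := by rw [← hct M]; exact hM.isHermitian
    have hMM : M * M⁻¹ = 1 := mul_nonsing_inv M hdet
    have hMM' : M⁻¹ * M = 1 := nonsing_inv_mul M hdet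
    have hMit : M⁻¹ᵀ = M⁻¹ := by rw [transpose_nonsing_inv, hMt]
    -- X is the correction term
    set X := H * U * M⁻¹ * Uᵀ * H with hXdef
    have hSR : SRk G A U = G - X := by rw [SRk, if_neg heq]
    -- X is PSD
    have hXpsd : X.PosSemidef := by
      have hMi : (M⁻¹).PosSemidef := hM.inv
      have := hMi.mul_mul_conjTranspose_same (H * U)
      rw [hct, transpose_mul, hHt] at this
      rw [hXdef]
      simp only [Matrix.mul_assoc] at this ⊢
      exact this
    -- square root
    open scoped MatrixOrder in set C := CFC.sqrt H with hCdef
    open scoped MatrixOrder in have hC2 : C * C = H := CFC.sqrt_mul_sqrt_self H hAG.nonneg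
    open scoped MatrixOrder in have hCt : Cᵀ = C := by rw [← hct C]; exact (CFC.sqrt_nonneg H).posSemidef.isHermitian
    set P := C * U * M⁻¹ * Uᵀ * C with hPdef
    have hPt : Pᵀ = P := by
      rw [hPdef]
      simp only [transpose_mul, hCt, hMit, transpose_transpose]
      simp only [Matrix.mul_assoc]
    have hPP : P * P = P := by
      have h1 : Uᵀ * C * (C * U) = M := by
        rw [hMdef, ← hC2]; simp only [Matrix.mul_assoc]
      calc P * P = C * U * (M⁻¹ * (Uᵀ * C * (C * U)) * M⁻¹) * Uᵀ * C := by
            rw [hPdef]; simp only [Matrix.mul_assoc]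
        _ = P := by rw [h1, hMM', Matrix.one_mul, hPdef]
    have h1P : (1 - P).PosSemidef := by
      have : (1 - P)ᴴ * (1 - P) = 1 - P := by
        rw [hct, transpose_sub, transpose_one, hPt, Matrix.sub_mul, Matrix.mul_sub,
          Matrix.mul_sub, Matrix.one_mul, Matrix.one_mul, Matrix.mul_one, hPP]
        abel
      rw [← this]
      exact posSemidef_conjTranspose_mul_self _
    have hCPC : C * (1 - P) * C = H - X := by
      rw [Matrix.mul_sub, Matrix.mul_one, Matrix.sub_mul, hC2, hPdef, hXdef, ← hC2]
      simp only [Matrix.mul_assoc]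
    have hHX : (H - X).PosSemidef := by
      have := h1P.conjTranspose_mul_mul_same C
      rwa [hct, hCt, hCPC] at this
    constructor
    · have : SRk G A U - A = H - X := by rw [hSR, hHdef]; abel
      rw [this]; exact hHX
    · have : η • A - SRk G A U = (η • A - G) + X := by rw [hSR]; abel
      rw [this]
      exact hGηA.add hXpsd


end
end

section
/- Let f : ℝ^d → ℝ be twice continuously differentiable, μ-strongly convex (μI ⪯ ∇²f(x) for all x, μ > 0), and M-strongly self-concordant. Let x, x₊ ∈ ℝ^d, set r := ‖x₊ − x‖_{∇²f(x)}, let B be a symmetric d×d matrix with B ⪰ ∇²f(x), and set P := (1 + Mr/2)²·B. Then tr(P − ∇²f(x₊)) ≤ (1 + Mr/2)²·(1 + Mr)·(tr(B − ∇²f(x))/tr(∇²f(x)) + 2Mr)·tr(∇²f(x₊)). -/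
open Matrix

noncomputable section

lemma trace_nonneg_of_psd {d : ℕ} {A : Matrix (Fin d) (Fin d) ℝ} (h : A.PosSemidef) :
    0 ≤ A.trace := by
  apply Finset.sum_nonneg
  intro i _
  simpa using h.diag_nonneg (i := i)

/-- trace bound for P = (1 + Mr/2)²·B against ∇²f(x₊). -/
theorem stmt_10 {d : ℕ} (f : Evec d → ℝ) (M μ : ℝ) (hμ : 0 < μ)
    (hC2 : ContDiff ℝ 2 f)
    (hstrong : ∀ x : Evec d,
      (hessE f x - μ • (1 : Matrix (Fin d) (Fin d) ℝ)).PosSemidef)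
    (hsc : ∀ x y z w : Evec d,
      ((M * anorm (hessE f z) (y - x)) • hessE f w - (hessE f y - hessE f x)).PosSemidef)
    (x xp : Evec d) (r : ℝ) (hr : r = anorm (hessE f x) (xp - x))
    (B : Matrix (Fin d) (Fin d) ℝ) (hBsymm : B.IsSymm)
    (hB : (B - hessE f x).PosSemidef)
    (P : Matrix (Fin d) (Fin d) ℝ) (hP : P = (1 + M * r / 2) ^ 2 • B) :
    (P - hessE f xp).trace ≤
      (1 + M * r / 2) ^ 2 * (1 + M * r)
        * ((B - hessE f x).trace / (hessE f x).trace + 2 * M * r)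
        * (hessE f xp).trace := by
  obtain rfl | hd := Nat.eq_zero_or_pos d
  · simp [Matrix.trace]
  set H := hessE f x with hH
  set Hp := hessE f xp with hHp
  -- traces of H and Hp are positive
  have htr : ∀ y : Evec d, μ * d ≤ (hessE f y).trace := by
    intro y
    have h1 := trace_nonneg_of_psd (hstrong y)
    rw [Matrix.trace_sub, Matrix.trace_smul, Matrix.trace_one, sub_nonneg] at h1
    simpa using h1
  have hdpos : (0:ℝ) < μ * d := by positivity
  have hHtr : 0 < H.trace := lt_of_lt_of_le hdpos (htr x)
  have hHptr : 0 < Hp.trace := lt_of_lt_of_le hdpos (htr xp)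
  -- r ≥ 0
  have hr0 : 0 ≤ r := hr ▸ Real.sqrt_nonneg _
  -- M * r ≥ 0
  have hMr : 0 ≤ M * r := by
    have h1 := trace_nonneg_of_psd (hsc x xp x x)
    have h2 := trace_nonneg_of_psd (hsc xp x x x)
    rw [anorm_sub_comm] at h2
    rw [← hr, Matrix.trace_sub, Matrix.trace_sub, Matrix.trace_smul, smul_eq_mul] at h1 h2
    nlinarith [hHtr]
  -- tr H ≤ (1 + M r) tr Hp
  have hkey : H.trace ≤ (1 + M * r) * Hp.trace := by
    have h1 := trace_nonneg_of_psd (hsc xp x x xp)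
    rw [anorm_sub_comm, ← hr, Matrix.trace_sub, Matrix.trace_sub, Matrix.trace_smul,
      smul_eq_mul] at h1
    nlinarith
  -- tr (B - H) ≥ 0
  have hBH : 0 ≤ (B - H).trace := trace_nonneg_of_psd hB
  rw [hP, Matrix.trace_sub, Matrix.trace_smul, smul_eq_mul]
  rw [Matrix.trace_sub] at hBH ⊢
  set a := B.trace - H.trace with ha
  set t := M * r with ht
  set h := H.trace
  set hp := Hp.trace
  have h2t : 2 * M * r = 2 * t := by rw [ht]; ring
  rw [div_add' _ _ _ (ne_of_gt hHtr), mul_div_assoc', div_mul_eq_mul_div,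
    le_div_iff₀ hHtr, h2t]
  have hc2 : (0:ℝ) ≤ (1 + t/2)^2 := sq_nonneg _
  have hpoly : (1 + t/2)^2 * (1 + t) * (1 - 2*t) ≤ 1 := by nlinarith [sq_nonneg t, mul_nonneg hMr hMr, mul_nonneg (mul_nonneg hMr hMr) hMr, mul_nonneg (mul_nonneg hMr hMr) (mul_nonneg hMr hMr)]
  nlinarith [mul_le_mul_of_nonneg_left hkey (mul_nonneg hBH hc2),
    mul_le_mul_of_nonneg_left hkey (mul_nonneg hc2 hHtr.le),
    mul_le_mul_of_nonneg_left hpoly (mul_pos hHptr hHtr).le, ha]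


end
end

section
/- Let f : ℝ^d → ℝ be twice continuously differentiable, μ-strongly convex (μI ⪯ ∇²f(x) for all x), L-smooth (∇²f(x) ⪯ LI for all x), and M-strongly self-concordant. Let x, x₊ ∈ ℝ^d, let B be a symmetric d×d matrix with B ⪰ ∇²f(x), set r := ‖x₊ − x‖_{∇²f(x)} and P := (1 + Mr/2)²·B, let 1 ≤ k < d, and set B₊ := SR-k(P, ∇²f(x₊), Ū(P, ∇²f(x₊))), assuming either P·Ū = ∇²f(x₊)·Ū or the Gram matrix Ū^⊤(P − ∇²f(x₊))Ū is invertible, where Ū := Ū(P, ∇²f(x₊)). Then B₊ ⪰ ∇²f(x₊) and tr(B₊ − ∇²f(x₊))/tr(∇²f(x₊)) ≤ (1 − k/d)·(1 + Mr/2)⁴·(tr(B − ∇²f(x))/tr(∇²f(x)) + 2Mr). -/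
open Matrix

noncomputable section

lemma psd_add {d : ℕ} {A B : Matrix (Fin d) (Fin d) ℝ} (hA : A.PosSemidef) (hB : B.PosSemidef) :
    (A + B).PosSemidef := by
  exact hA.add hB

lemma psd_smul {d : ℕ} {A : Matrix (Fin d) (Fin d) ℝ} (hA : A.PosSemidef) {c : ℝ} (hc : 0 ≤ c) :
    (c • A).PosSemidef := by
  exact hA.smul hc

lemma psd_zero {d : ℕ} : (0 : Matrix (Fin d) (Fin d) ℝ).PosSemidef :=
  ⟨by simp [Matrix.IsHermitian], fun x => by simp⟩

lemma psd_diag {d : ℕ} {A : Matrix (Fin d) (Fin d) ℝ} (hA : A.PosSemidef) (i : Fin d) :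
    0 ≤ A i i := by
  exact hA.diag_nonneg

lemma psd_trace_nonneg {d : ℕ} {A : Matrix (Fin d) (Fin d) ℝ} (hA : A.PosSemidef) :
    0 ≤ A.trace :=
  Finset.sum_nonneg fun i _ => psd_diag hA i

lemma psd_one {d : ℕ} : (1 : Matrix (Fin d) (Fin d) ℝ).PosSemidef := by
  simpa using Matrix.PosSemidef.diagonal (d := fun _ : Fin d => (1:ℝ)) (by intro i; norm_num)

lemma srk_core {d k : ℕ} {S : Matrix (Fin d) (Fin d) ℝ} (hS : S.PosSemidef)
    (U : Matrix (Fin d) (Fin k) ℝ) (hdet : IsUnit (Uᵀ * S * U).det) :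
    (S - S * U * (Uᵀ * S * U)⁻¹ * Uᵀ * S).PosSemidef ∧
    (S * U * (Uᵀ * S * U)⁻¹ * Uᵀ * S).PosSemidef ∧
    (S - S * U * (Uᵀ * S * U)⁻¹ * Uᵀ * S) * U = 0 := by
  have hSsy : Sᵀ = S := by
    have := hS.1; rwa [Matrix.IsHermitian, conjTranspose_eq_transpose_of_trivial] at this
  obtain ⟨C, hCpsd, hCC⟩ : ∃ C : Matrix (Fin d) (Fin d) ℝ, C.PosSemidef ∧ C * C = S :=
    by open scoped MatrixOrder in
      exact ⟨CFC.sqrt S, (CFC.sqrt_nonneg S).posSemidef, CFC.sqrt_mul_sqrt_self S hS.nonneg⟩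
  have hCsy : Cᵀ = C := by
    have := hCpsd.1; rwa [Matrix.IsHermitian, conjTranspose_eq_transpose_of_trivial] at this
  set V := C * U with hVdef
  have hVV : Vᵀ * V = Uᵀ * S * U := by
    rw [hVdef, transpose_mul, hCsy, Matrix.mul_assoc, ← Matrix.mul_assoc C, hCC,
      ← Matrix.mul_assoc]
  set G := (Uᵀ * S * U)⁻¹ with hGdef
  have hGsy : Gᵀ = G := by
    rw [hGdef, transpose_nonsing_inv]
    congr 1
    rw [transpose_mul, transpose_mul, transpose_transpose, hSsy, Matrix.mul_assoc]
  have hGVV : G * (Uᵀ * S * U) = 1 := Matrix.nonsing_inv_mul _ hdet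
  have hVVG : (Uᵀ * S * U) * G = 1 := Matrix.mul_nonsing_inv _ hdet
  set Mp := (1 : Matrix (Fin d) (Fin d) ℝ) - V * G * Vᵀ with hMdef
  have hMsy : Mpᵀ = Mp := by
    simp [hMdef, transpose_sub, transpose_mul, hGsy, Matrix.mul_assoc]
  have hproj : V * G * Vᵀ * (V * G * Vᵀ) = V * G * Vᵀ := by
    calc V * G * Vᵀ * (V * G * Vᵀ) = V * (G * (Vᵀ * V) * G) * Vᵀ := by
          simp only [Matrix.mul_assoc]
        _ = V * G * Vᵀ := by rw [hVV, hGVV, Matrix.one_mul]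
  have hMidem : Mp * Mp = Mp := by
    rw [hMdef, Matrix.sub_mul, Matrix.one_mul, Matrix.mul_sub, Matrix.mul_one, hproj]
    abel
  have hMpsd : Mp.PosSemidef := by
    have := Matrix.posSemidef_conjTranspose_mul_self Mp
    rwa [conjTranspose_eq_transpose_of_trivial, hMsy, hMidem] at this
  have hGpsd : G.PosSemidef := by
    have h1 := Matrix.posSemidef_conjTranspose_mul_self (V * G)
    have e : (V * G)ᴴ * (V * G) = G := by
      rw [conjTranspose_eq_transpose_of_trivial, transpose_mul, hGsy]
      calc G * Vᵀ * (V * G) = G * (Vᵀ * V) * G := by simp only [Matrix.mul_assoc]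
        _ = G := by rw [hVV, Matrix.mul_assoc, hVVG, Matrix.mul_one]
    rwa [e] at h1
  have key : C * Mp * C = S - S * U * G * Uᵀ * S := by
    rw [hMdef, Matrix.mul_sub, Matrix.sub_mul, Matrix.mul_one, hCC]
    congr 1
    rw [hVdef, transpose_mul, hCsy]
    calc C * (C * U * G * (Uᵀ * C)) * C = (C * C) * U * G * Uᵀ * (C * C) := by
          simp only [Matrix.mul_assoc]
        _ = S * U * G * Uᵀ * S := by rw [hCC]
  refine ⟨?_, ?_, ?_⟩
  · have := hMpsd.mul_mul_conjTranspose_same C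
    rw [conjTranspose_eq_transpose_of_trivial, hCsy, key] at this
    exact this
  · have := hGpsd.mul_mul_conjTranspose_same (S * U)
    have e : S * U * G * (S * U)ᴴ = S * U * G * Uᵀ * S := by
      rw [conjTranspose_eq_transpose_of_trivial, transpose_mul, hSsy]
      simp only [Matrix.mul_assoc]
    rwa [e] at this
  · rw [Matrix.sub_mul]
    have e2 : S * U * G * Uᵀ * S * U = S * U := by
      calc S * U * G * Uᵀ * S * U = S * U * (G * (Uᵀ * S * U)) := by
            simp only [Matrix.mul_assoc]
        _ = S * U := by rw [hGVV, Matrix.mul_one]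
    rw [e2, sub_self]

lemma scalar_ineq (m : ℝ) (hm : 0 ≤ m) :
    ((1 + m/2)^2)^2 - 1 ≤ 2*m*((1 + m/2)^2)^2 := by
  nlinarith [hm, sq_nonneg m, pow_nonneg hm 3, pow_nonneg hm 4]

lemma inner_ineq (t a b c m : ℝ) (ha0 : 0 < a) (hb0 : 0 < b) (hc0 : 0 ≤ c)
    (hm : 0 ≤ m) (ht0 : 0 ≤ t) (hab : a ≤ t * b) (hscalar : t^2 - 1 ≤ 2*m*t^2) :
    t * (c + a) - b ≤ t ^ 2 * (c / a + 2 * m) * b := by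
  have hca : 0 ≤ c / a := div_nonneg hc0 ha0.le
  have hc_eq : c = (c / a) * a := (div_mul_cancel₀ c ha0.ne').symm
  have step1 : c + a ≤ (c/a) * (t * b) + t * b := by
    have : (c/a) * a ≤ (c/a) * (t*b) := mul_le_mul_of_nonneg_left hab hca
    linarith [this]
  have step2 : t * (c + a) ≤ t * ((c/a) * (t * b) + t * b) :=
    mul_le_mul_of_nonneg_left step1 ht0
  have step3 : (t^2 - 1) * b ≤ 2 * m * t^2 * b :=
    mul_le_mul_of_nonneg_right hscalar hb0.le
  nlinarith [step2, step3]

lemma greedy_bound {d k : ℕ} (hkd : k < d) (s : Fin d → ℝ) (hnn : ∀ j, 0 ≤ s j)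
    (idx : Fin k → Fin d) (hinj : Function.Injective idx)
    (hg : ∀ (l : Fin k) (j : Fin d), j ∉ Set.range idx → s j ≤ s (idx l)) :
    ∑ j ∈ (Finset.image idx Finset.univ)ᶜ, s j ≤ (1 - (k:ℝ)/d) * ∑ j, s j := by
  set T := Finset.image idx Finset.univ with hT
  have hTcard : T.card = k := by
    rw [hT, Finset.card_image_of_injective _ hinj, Finset.card_univ, Fintype.card_fin]
  have hTccard : Tᶜ.card = d - k := by
    rw [Finset.card_compl, hTcard, Fintype.card_fin]
  have hsplit : ∑ j, s j = ∑ j ∈ T, s j + ∑ j ∈ Tᶜ, s j :=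
    (Finset.sum_add_sum_compl T s).symm
  have himg : ∑ j ∈ T, s j = ∑ q : Fin k, s (idx q) := Finset.sum_image (by
    intro a _ b _ h; exact hinj h)
  have key : (k : ℝ) * ∑ j ∈ Tᶜ, s j ≤ ((d : ℝ) - k) * ∑ j ∈ T, s j := by
    have h1 : ∑ j ∈ Tᶜ, ∑ _q : Fin k, s j ≤ ∑ j ∈ Tᶜ, ∑ q : Fin k, s (idx q) := by
      refine Finset.sum_le_sum fun j hj => Finset.sum_le_sum fun q _ => ?_
      refine hg q j ?_
      rintro ⟨l, hl⟩
      exact (Finset.mem_compl.mp hj)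
        (by rw [hT]; exact Finset.mem_image.mpr ⟨l, Finset.mem_univ _, hl⟩)
    have h2 : ∑ j ∈ Tᶜ, ∑ _q : Fin k, s j = (k : ℝ) * ∑ j ∈ Tᶜ, s j := by
      simp only [Finset.sum_const, Finset.card_univ, Fintype.card_fin, nsmul_eq_mul,
        Finset.mul_sum]
    have h3 : ∑ _j ∈ Tᶜ, ∑ q : Fin k, s (idx q) = ((d:ℝ) - k) * ∑ j ∈ T, s j := by
      rw [Finset.sum_const, hTccard, himg, nsmul_eq_mul, Nat.cast_sub hkd.le]
    rw [h2, h3] at h1; exact h1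
  have hd0 : (0:ℝ) < d := by
    have : 0 < d := lt_of_le_of_lt (Nat.zero_le k) hkd
    exact_mod_cast this
  have hfrac : (1 - (k:ℝ)/d) = ((d:ℝ) - k)/d := by field_simp
  rw [hsplit, hfrac, div_mul_eq_mul_div, le_div_iff₀ hd0]
  nlinarith [key, Finset.sum_nonneg (fun j (_ : j ∈ T) => hnn j),
    Finset.sum_nonneg (fun j (_ : j ∈ Tᶜ) => hnn j)]

/-- one step of the greedy SR-k update on the scaled matrix P keeps the
estimator above the Hessian and contracts the relative trace error. -/
theorem stmt_11 {d k : ℕ} (hk1 : 1 ≤ k) (hkd : k < d)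
    (f : Evec d → ℝ) (M μ L : ℝ) (hμ : 0 < μ) (hμL : μ ≤ L)
    (hC2 : ContDiff ℝ 2 f)
    (hstrong : ∀ x : Evec d,
      (hessE f x - μ • (1 : Matrix (Fin d) (Fin d) ℝ)).PosSemidef)
    (hsmooth : ∀ x : Evec d,
      (L • (1 : Matrix (Fin d) (Fin d) ℝ) - hessE f x).PosSemidef)
    (hsc : ∀ x y z w : Evec d,
      ((M * anorm (hessE f z) (y - x)) • hessE f w - (hessE f y - hessE f x)).PosSemidef)
    (x xp : Evec d)
    (B : Matrix (Fin d) (Fin d) ℝ) (hBsymm : B.IsSymm)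
    (hB : (B - hessE f x).PosSemidef)
    (r : ℝ) (hr : r = anorm (hessE f x) (xp - x))
    (P : Matrix (Fin d) (Fin d) ℝ) (hP : P = (1 + M * r / 2) ^ 2 • B)
    (idx : Fin k → Fin d) (hidx : Function.Injective idx)
    (hgreedy : ∀ (l : Fin k) (j : Fin d), j ∉ Set.range idx →
      (P - hessE f xp) j j ≤ (P - hessE f xp) (idx l) (idx l))
    (U : Matrix (Fin d) (Fin k) ℝ)
    (hUdef : U = Matrix.of fun p q => if p = idx q then (1 : ℝ) else 0)
    (hgram : P * U = hessE f xp * U ∨ IsUnit (Uᵀ * (P - hessE f xp) * U).det)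
    (Bp : Matrix (Fin d) (Fin d) ℝ) (hBp : Bp = SRk P (hessE f xp) U) :
    (Bp - hessE f xp).PosSemidef ∧
      (Bp - hessE f xp).trace / (hessE f xp).trace ≤
        (1 - (k : ℝ) / d) * (1 + M * r / 2) ^ 4
          * ((B - hessE f x).trace / (hessE f x).trace + 2 * M * r) := by
  set H := hessE f x with hH
  set Hp := hessE f xp with hHp
  -- self-concordance specializations
  have A1 : ((M * r) • H - (Hp - H)).PosSemidef := by
    have := hsc x xp x x
    rwa [← hr] at this
  have A2 : ((M * r) • Hp - (H - Hp)).PosSemidef := by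
    have := hsc xp x x xp
    have hnorm : anorm (hessE f x) (x - xp) = anorm (hessE f x) (xp - x) := by
      unfold anorm
      congr 1
      have : (fun i => (x - xp) i) = -(fun i => (xp - x) i) := by
        funext i; simp
      rw [this, Matrix.mulVec_neg, dotProduct_neg, neg_dotProduct, neg_neg]
    rwa [hnorm, ← hr] at this
  -- trace scalars
  set a := H.trace with ha_def
  set b := Hp.trace with hb_def
  set c := (B - H).trace with hc_def
  have hd0 : (0:ℝ) < d := by
    have : 0 < d := lt_of_le_of_lt (Nat.zero_le k) hkd
    exact_mod_cast this
  have htr_mu : ∀ y : Evec d, μ * d ≤ (hessE f y).trace := by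
    intro y
    have h0 := psd_trace_nonneg (hstrong y)
    rw [Matrix.trace_sub, Matrix.trace_smul, Matrix.trace_one, smul_eq_mul, sub_nonneg] at h0
    simpa [Fintype.card_fin] using h0
  have ha0 : 0 < a := lt_of_lt_of_le (by positivity) (htr_mu x)
  have hb0 : 0 < b := lt_of_lt_of_le (by positivity) (htr_mu xp)
  have hc0 : 0 ≤ c := psd_trace_nonneg hB
  have h1 : b - a ≤ M * r * a := by
    have := psd_trace_nonneg A1
    rw [Matrix.trace_sub, Matrix.trace_sub, Matrix.trace_smul, smul_eq_mul, sub_nonneg] at this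
    linarith
  have h2 : a - b ≤ M * r * b := by
    have := psd_trace_nonneg A2
    rw [Matrix.trace_sub, Matrix.trace_sub, Matrix.trace_smul, smul_eq_mul, sub_nonneg] at this
    linarith
  have hm : 0 ≤ M * r := by nlinarith
  set t := (1 + M * r / 2) ^ 2 with ht_def
  have ht0 : 0 ≤ t := by positivity
  have ht1 : 1 + M * r ≤ t := by nlinarith
  clear_value a b c t
  -- H is PSD
  have hHpsd : H.PosSemidef := by
    have := psd_add (hstrong x) (psd_smul psd_one hμ.le)
    simpa using this
  -- P - Hp is PSD
  have hS : (P - Hp).PosSemidef := by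
    have := psd_add (psd_smul hB ht0)
      (psd_add (psd_smul hHpsd (by linarith : (0:ℝ) ≤ t - (1 + M * r))) A1)
    have e : t • (B - H) + ((t - (1 + M * r)) • H + ((M * r) • H - (Hp - H))) = P - Hp := by
      rw [hP]
      module
    rwa [e] at this
  -- unified S' facts
  set S := P - Hp with hS_def
  clear_value S
  obtain ⟨S', hS'psd, hdiffpsd, hS'U, hBpS'⟩ :
      ∃ S' : Matrix (Fin d) (Fin d) ℝ, S'.PosSemidef ∧ (S - S').PosSemidef ∧ S' * U = 0 ∧
        Bp - Hp = S' := by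
    by_cases hcase : P * U = Hp * U
    · refine ⟨S, hS, by simpa using psd_zero, ?_, ?_⟩
      · rw [hS_def, Matrix.sub_mul, hcase, sub_self]
      · rw [hBp, SRk, if_pos hcase, ← hS_def]
    · have hdet : IsUnit (Uᵀ * S * U).det := by
        rcases hgram with h | h
        · exact absurd h hcase
        · exact h
      obtain ⟨hpsd1, hpsd2, hzero⟩ := srk_core hS U hdet
      refine ⟨S - S * U * (Uᵀ * S * U)⁻¹ * Uᵀ * S, hpsd1, ?_, hzero, ?_⟩
      · have e : S - (S - S * U * (Uᵀ * S * U)⁻¹ * Uᵀ * S) = S * U * (Uᵀ * S * U)⁻¹ * Uᵀ * S := by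
          abel
        rw [e]; exact hpsd2
      · rw [hBp, SRk, if_neg hcase, sub_right_comm, ← hS_def]
  -- diagonal entries of S' vanish on the selected indices
  have hmulU : ∀ (A : Matrix (Fin d) (Fin d) ℝ) (i : Fin d) (q : Fin k),
      (A * U) i q = A i (idx q) := by
    intro A i q
    rw [hUdef]
    simp only [Matrix.mul_apply, Matrix.of_apply, mul_ite, mul_one, mul_zero]
    rw [Finset.sum_ite_eq' Finset.univ (idx q) (fun j => A i j)]
    simp
  have hdiagT : ∀ q : Fin k, S' (idx q) (idx q) = 0 := by
    intro q
    have := congrFun (congrFun hS'U (idx q)) q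
    rwa [hmulU S' (idx q) q, Matrix.zero_apply] at this
  -- trace bound for S'
  set T := Finset.image idx Finset.univ with hT
  have htrS' : S'.trace ≤ (1 - (k:ℝ)/d) * S.trace := by
    have e1 : S'.trace = ∑ j ∈ Tᶜ, S' j j := by
      have : S'.trace = ∑ j ∈ T, S' j j + ∑ j ∈ Tᶜ, S' j j := by
        rw [Finset.sum_add_sum_compl T (fun j => S' j j)]
        simp [Matrix.trace, Matrix.diag]
      have hz : ∑ j ∈ T, S' j j = 0 := by
        refine Finset.sum_eq_zero fun j hj => ?_
        obtain ⟨q, _, rfl⟩ := Finset.mem_image.mp hj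
        exact hdiagT q
      rw [this, hz, zero_add]
    have e2 : ∑ j ∈ Tᶜ, S' j j ≤ ∑ j ∈ Tᶜ, S j j := by
      refine Finset.sum_le_sum fun j _ => ?_
      have := psd_diag hdiffpsd j
      simp only [Matrix.sub_apply] at this
      linarith
    have e3 : ∑ j ∈ Tᶜ, S j j ≤ (1 - (k:ℝ)/d) * ∑ j, S j j := by
      refine greedy_bound hkd (fun j => S j j) (fun j => psd_diag hS j) idx hidx ?_
      intro l j hj
      exact hgreedy l j hj
    have e4 : ∑ j, S j j = S.trace := by simp [Matrix.trace, Matrix.diag]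
    rw [e1, ← e4]
    exact le_trans e2 e3
  -- trace of S
  have htrS : S.trace = t * (c + a) - b := by
    rw [hS_def, Matrix.trace_sub, hP, Matrix.trace_smul, smul_eq_mul, ← hb_def]
    have : B.trace = c + a := by rw [hc_def, ha_def, Matrix.trace_sub]; ring
    rw [this]
  -- the scalar inequality
  have hscalar : t ^ 2 - 1 ≤ 2 * (M * r) * t ^ 2 := by
    have := scalar_ineq (M * r) hm
    rw [← ht_def] at this
    exact this
  have hab : a ≤ t * b := by nlinarith
  have hkd' : 0 ≤ 1 - (k:ℝ)/d := by
    rw [sub_nonneg, div_le_one hd0]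
    exact_mod_cast hkd.le
  have hinner : t * (c + a) - b ≤ t ^ 2 * (c / a + 2 * (M * r)) * b :=
    inner_ineq t a b c (M * r) ha0 hb0 hc0 hm ht0 hab hscalar
  refine ⟨hBpS' ▸ hS'psd, ?_⟩
  rw [hBpS', div_le_iff₀ hb0]
  calc S'.trace ≤ (1 - (k:ℝ)/d) * S.trace := htrS'
    _ ≤ (1 - (k:ℝ)/d) * (t ^ 2 * (c / a + 2 * (M * r)) * b) := by
        rw [htrS]; exact mul_le_mul_of_nonneg_left hinner hkd'
    _ = (1 - (k:ℝ)/d) * (1 + M * r / 2) ^ 4 * (c / a + 2 * M * r) * b := by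
        rw [ht_def]; ring

end
end
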